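/- arXiv:1311.0324 — 3 statements merged into one kernel-verified Lean document; each statement's English description precedes it below -/
import Mathlib

section
/- Let α > 0 and β > 0 with α ≠ β. Suppose that for all n, m ≥ 2 and every joint distribution R = (r_{kl}) ∈ Δ_{nm} with strictly positive marginal P, the identity Σ_{k=1}^n Σ_{l=1}^m r^{(α)}_{kl} / (Σ_{j=1}^m q_{j|k}^β) = Σ_{k=1}^n Σ_{l=1}^m r^{(β)}_{kl} / (Σ_{j=1}^m q_{j|k}^β) holds. Then β = 1. (In particular, it suffices to check the identity fails for n = m = 2 with P = (1/2, 1/2), Q_{|1} = (1, 0), Q_{|2} = (1/2, 1/2) whenever β ≠ 1.) -/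
open Finset

noncomputable section

/-- `p` is a probability distribution on `Fin n`. -/
def IsDist {n : ℕ} (p : Fin n → ℝ) : Prop := (∀ i, 0 ≤ p i) ∧ ∑ i, p i = 1

/-- The uniform distribution on `Fin n`. -/
def unif (n : ℕ) : Fin n → ℝ := fun _ => (n : ℝ)⁻¹

/-- Flatten a joint distribution `r : Fin n → Fin m → ℝ` into a vector on `Fin (n*m)`. -/
def joint {n m : ℕ} (r : Fin n → Fin m → ℝ) : Fin (n * m) → ℝ :=
  fun q => r (finProdFinEquiv.symm q).1 (finProdFinEquiv.symm q).2

/-- Marginal distribution of the first coordinate. -/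
def marg {n m : ℕ} (r : Fin n → Fin m → ℝ) : Fin n → ℝ := fun k => ∑ l, r k l

/-- Conditional distribution of the second coordinate given the first equals `k`. -/
def condDist {n m : ℕ} (r : Fin n → Fin m → ℝ) (k : Fin n) : Fin m → ℝ :=
  fun l => r k l / marg r k

/-- The `α`-escort distribution of `p` (with the convention `0 ^ α = 0`). -/
def escort (α : ℝ) {n : ℕ} (p : Fin n → ℝ) : Fin n → ℝ :=
  fun k => p k ^ α / ∑ i, p i ^ α

/-- The `γ`-escort of a joint distribution `r`. -/
def jescort (γ : ℝ) {n m : ℕ} (r : Fin n → Fin m → ℝ) (k : Fin n) (l : Fin m) : ℝ :=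
  r k l ^ γ / ∑ i, ∑ j, r i j ^ γ

/-!
Test the identity on the joint distribution with marginal `(1/2, 1/2)` and conditionals
`(1, 0)`, `(1/2, 1/2)`. Writing `a = (1/2)^α`, `b = (1/2)^β`, the two sides become
`(b + a) / (b (1 + 2a))` and `(b + b) / (b (1 + 2b))`, whose difference is a nonzero multiple
of `(2b - 1)(b - a)`. Since `t ↦ (1/2)^t` is injective and `α ≠ β`, this forces `(1/2)^β = 1/2`.
-/

theorem joint_sum_eq_sum_prod {n m : ℕ} (r : Fin n → Fin m → ℝ) :
    ∑ q, joint r q = ∑ k, ∑ l, r k l := by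
  rw [← Fintype.sum_prod_type']
  exact finProdFinEquiv.symm.sum_comp fun p => r p.1 p.2

theorem isDist_joint_iff {n m : ℕ} (r : Fin n → Fin m → ℝ) :
    IsDist (joint r) ↔ (∀ k l, 0 ≤ r k l) ∧ ∑ k, ∑ l, r k l = 1 := by
  rw [IsDist, joint_sum_eq_sum_prod]
  refine and_congr_left' ⟨fun h k l => ?_, fun h q => h _ _⟩
  simpa [joint] using h (finProdFinEquiv (k, l))

def testJoint : Fin 2 → Fin 2 → ℝ := ![![1/2, 0], ![1/4, 1/4]]

theorem isDist_joint_testJoint : IsDist (joint testJoint) := by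
  rw [isDist_joint_iff]
  refine ⟨fun k l => ?_, ?_⟩
  · fin_cases k <;> fin_cases l <;> norm_num [testJoint]
  · norm_num [testJoint, Fin.sum_univ_two]

theorem marg_testJoint (k : Fin 2) : marg testJoint k = 1/2 := by
  fin_cases k <;> norm_num [marg, testJoint, Fin.sum_univ_two]

theorem sum_jescort_div_testJoint {β γ : ℝ} (hβ : β ≠ 0) (hγ : γ ≠ 0) :
    ∑ k, ∑ l, jescort γ testJoint k l / ∑ j, condDist testJoint k j ^ β =
      ((1/2) ^ β + (1/2) ^ γ) / ((1/2) ^ β * (1 + 2 * (1/2) ^ γ)) := by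
  have hquarter (t : ℝ) : (1/4 : ℝ) ^ t = (1/2) ^ t * (1/2) ^ t := by
    rw [← Real.mul_rpow (by norm_num) (by norm_num)]; norm_num
  simp only [jescort, condDist, marg_testJoint, Fin.sum_univ_two]
  norm_num [testJoint, hquarter, Real.zero_rpow hβ, Real.zero_rpow hγ]
  field_simp
  ring

theorem eq_half_or_eq_of_div_eq {a b c : ℝ} (hb : b ≠ 0) (ha : 0 < a) (hc : 0 < c)
    (h : (b + a) / (b * (1 + 2 * a)) = (b + c) / (b * (1 + 2 * c))) : b = 1/2 ∨ a = c := by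
  rw [div_eq_div_iff (by positivity) (by positivity)] at h
  have : b * ((2 * b - 1) * (c - a)) = 0 := by linear_combination h
  rcases mul_eq_zero.1 ((mul_eq_zero.1 this).resolve_left hb) with h | h
  · left; linarith
  · right; linarith

/-- Equation (19) of the paper: the escort identity forces `β = 1`. -/
theorem escort_identity_forces_beta_one
    (α β : ℝ) (hα : 0 < α) (hβ : 0 < β) (hαβ : α ≠ β)
    (hid : ∀ n m, 2 ≤ n → 2 ≤ m → ∀ r : Fin n → Fin m → ℝ,
      IsDist (joint r) → (∀ k, 0 < marg r k) →
      ∑ k, ∑ l, jescort α r k l / (∑ j, condDist r k j ^ β) =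
      ∑ k, ∑ l, jescort β r k l / (∑ j, condDist r k j ^ β)) :
    β = 1 := by
  have h := hid 2 2 le_rfl le_rfl testJoint isDist_joint_testJoint
    fun k => by rw [marg_testJoint]; norm_num
  rw [sum_jescort_div_testJoint hβ.ne' hα.ne', sum_jescort_div_testJoint hβ.ne' hβ.ne'] at h
  have hinj {x y : ℝ} : (1/2 : ℝ) ^ x = (1/2) ^ y ↔ x = y :=
    Real.rpow_right_inj (by norm_num) (by norm_num)
  rcases eq_half_or_eq_of_div_eq (by positivity) (by positivity) (by positivity) h with h | h
  · exact hinj.1 (h.trans (Real.rpow_one _).symm)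
  · exact absurd (hinj.1 h) hαβ
end
end

section
/- Let α > 0. Suppose that for all n, m ≥ 2 and every joint distribution R = (r_{kl}) ∈ Δ_{nm} with strictly positive marginal P, the identity Σ_{k=1}^n Σ_{l=1}^m r^{(α)}_{kl}·log r_{kl} = Σ_{k=1}^n p^{(α)}_k·log p_k + Σ_{k=1}^n p^{(α)}_k Σ_{l=1}^m q^{(α)}_{l|k}·log q_{l|k} holds (with the convention that any term with a zero probability entry is 0). Then α = 1. -/
open Finset

noncomputable section

/-- Equations (12)-(13) of the paper: the escort Shannon-type chain rule
forces `α = 1`. -/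
theorem escort_chain_rule_forces_alpha_one
    (α : ℝ) (hα : 0 < α)
    (hid : ∀ n m, 2 ≤ n → 2 ≤ m → ∀ r : Fin n → Fin m → ℝ,
      IsDist (joint r) → (∀ k, 0 < marg r k) →
      ∑ k, ∑ l, jescort α r k l * Real.logb 2 (r k l) =
        (∑ k, escort α (marg r) k * Real.logb 2 (marg r k)) +
        ∑ k, escort α (marg r) k *
          ∑ l, escort α (condDist r k) l * Real.logb 2 (condDist r k l)) :
    α = 1 := by
  classical
  set r : Fin 2 → Fin 2 → ℝ := ![![1/2, 0], ![1/4, 1/4]] with hrdef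
  have hr00 : r 0 0 = 1/2 := by norm_num [hrdef]
  have hr01 : r 0 1 = 0 := by norm_num [hrdef]
  have hr10 : r 1 0 = 1/4 := by norm_num [hrdef]
  have hr11 : r 1 1 = 1/4 := by norm_num [hrdef]
  have hrnn : ∀ k l : Fin 2, 0 ≤ r k l := by
    intro k l; fin_cases k <;> fin_cases l <;> norm_num [hrdef]
  have hdist : IsDist (joint r) := by
    constructor
    · intro q; exact hrnn _ _
    · have e : ∑ q : Fin (2*2), joint r q = ∑ p : Fin 2 × Fin 2, r p.1 p.2 :=
        Equiv.sum_comp finProdFinEquiv.symm (fun p : Fin 2 × Fin 2 => r p.1 p.2)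
      rw [e, Fintype.sum_prod_type, Fin.sum_univ_two, Fin.sum_univ_two,
        Fin.sum_univ_two, hr00, hr01, hr10, hr11]
      norm_num
  have hm0 : marg r 0 = 1/2 := by simp [marg, Fin.sum_univ_two, hrdef]
  have hm1 : marg r 1 = 1/2 := by simp [marg, Fin.sum_univ_two, hrdef]; norm_num
  have hmpos : ∀ k, 0 < marg r k := by
    intro k; fin_cases k <;> norm_num [marg, Fin.sum_univ_two, hrdef]
  have h := hid 2 2 le_rfl le_rfl r hdist hmpos
  set t : ℝ := (1/2 : ℝ) ^ α with htdef
  have ht0 : 0 < t := Real.rpow_pos_of_pos (by norm_num) α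
  have hquarter : (1/4 : ℝ) ^ α = t * t := by
    rw [show (1/4 : ℝ) = (1/2) * (1/2) by norm_num,
      Real.mul_rpow (by norm_num) (by norm_num)]
  have hzero : (0 : ℝ) ^ α = 0 := Real.zero_rpow (ne_of_gt hα)
  have hone : (1 : ℝ) ^ α = 1 := Real.one_rpow α
  have hlhalf : Real.logb 2 (1/2 : ℝ) = -1 := by
    rw [show (1/2 : ℝ) = 2⁻¹ by norm_num, Real.logb_inv, Real.logb_self_eq_one] <;> norm_num
  have hlquarter : Real.logb 2 (1/4 : ℝ) = -2 := by
    rw [show (1/4 : ℝ) = ((2:ℝ)^(2:ℕ))⁻¹ by norm_num, Real.logb_inv, Real.logb_pow,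
      Real.logb_self_eq_one] <;> norm_num
  simp only [Fin.sum_univ_two, jescort, escort, condDist] at h
  rw [hm0, hm1, hr00, hr01, hr10, hr11] at h
  norm_num [hzero, hone, hquarter, hlhalf, hlquarter] at h
  rw [← htdef] at h
  have hS : 0 < t + (t*t + t*t) := by positivity
  have hhalf : t / (t + t) = 1/2 := by
    rw [← two_mul, div_eq_div_iff (ne_of_gt (by positivity : (0:ℝ) < 2 * t)) (two_ne_zero)]
    ring
  have ht : t = 1/2 := by
    rw [hhalf] at h
    have hcomb : -(t / (t + (t*t + t*t))) + (-(t * t / (t + (t*t + t*t)) * 2)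
        + -(t * t / (t + (t*t + t*t)) * 2)) = -((t + 4*(t*t)) / (t + (t*t + t*t))) := by
      ring
    rw [hcomb] at h
    norm_num at h
    rw [div_eq_iff (ne_of_gt hS)] at h
    have hq : (t - 1/2) * t = 0 := by linear_combination h
    rcases mul_eq_zero.mp hq with h4 | h4
    · linarith
    · exact absurd h4 (ne_of_gt ht0)
  have hlog : α * Real.log (1/2) = Real.log (1/2) := by
    have := Real.log_rpow (show (0:ℝ) < 1/2 by norm_num) α
    rw [← htdef, ht] at this
    linarith [this]
  have hne : Real.log (1/2 : ℝ) ≠ 0 := by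
    have : Real.log (1/2 : ℝ) < 0 := Real.log_neg (by norm_num) (by norm_num)
    linarith
  have h3 : (α - 1) * Real.log (1/2 : ℝ) = 0 := by linear_combination hlog
  rcases mul_eq_zero.mp h3 with h4 | h4
  · linarith
  · exact absurd h4 hne
end
end

section
/- Let λ ≠ 0, α > 0, and let (T_n)_{n≥1} be a family of functions T_n : Δ_n → ℝ satisfying the pseudo-additive strong additivity axiom: for all n, m ≥ 1 and every joint distribution R ∈ Δ_{nm} with strictly positive marginal P, T_{nm}(R) = T_n(P) + C + λ·T_n(P)·C where C = Σ_k p^{(α)}_k·T_m(Q_{|k}). Then for every n ≥ 1, T_{2^n}(U_{2^n}) = ((1 + λ·T_2(U_2))^n − 1)/λ. -/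
open Finset

noncomputable section

/-! On an independent pair `P ⊗ Q` every conditional distribution is `Q` and the escort weights
sum to `1`, so the axiom collapses to `T(P ⊗ Q) = T(P) ⊕_λ T(Q)`. As
`1 + λ (x ⊕_λ y) = (1 + λ x)(1 + λ y)`, the quantity `1 + λ T(U_{2^n})` is multiplied by
`1 + λ T₂(U₂)` when passing to `U_{2^{n+1}} = U_{2^n} ⊗ U₂`. -/

def IsStronglyPseudoAdditive (lam α : ℝ) (T : (n : ℕ) → (Fin n → ℝ) → ℝ) : Prop :=
  ∀ n m, 1 ≤ n → 1 ≤ m → ∀ r : Fin n → Fin m → ℝ,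
    IsDist (joint r) → (∀ k, 0 < marg r k) →
    T (n * m) (joint r) =
      T n (marg r) + (∑ k, escort α (marg r) k * T m (condDist r k)) +
      lam * T n (marg r) * (∑ k, escort α (marg r) k * T m (condDist r k))

def prodDist {n m : ℕ} (p : Fin n → ℝ) (q : Fin m → ℝ) : Fin n → Fin m → ℝ :=
  fun k l => p k * q l

theorem IsDist.pos {n : ℕ} {p : Fin n → ℝ} (hp : IsDist p) : 0 < n := by
  refine Nat.pos_of_ne_zero ?_
  rintro rfl
  simpa using hp.2

theorem isDist_unif {n : ℕ} (hn : 0 < n) : IsDist (unif n) :=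
  ⟨fun _ => by unfold unif; positivity, by simp [unif, hn.ne']⟩

theorem sum_joint {n m : ℕ} (r : Fin n → Fin m → ℝ) : ∑ i, joint r i = ∑ k, ∑ l, r k l := by
  rw [← Fintype.sum_prod_type']
  exact finProdFinEquiv.symm.sum_comp (fun x => r x.1 x.2)

theorem sum_escort {n : ℕ} (α : ℝ) {p : Fin n → ℝ} (hn : 0 < n) (hp : ∀ k, 0 < p k) :
    ∑ k, escort α p k = 1 := by
  have : Nonempty (Fin n) := Fin.pos_iff_nonempty.mp hn
  simp only [escort]
  rw [← Finset.sum_div, div_self]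
  exact (Finset.sum_pos (fun i _ => Real.rpow_pos_of_pos (hp i) α) univ_nonempty).ne'

section prodDist

variable {n m : ℕ} {p : Fin n → ℝ} {q : Fin m → ℝ}

theorem IsDist.joint_prodDist (hp : IsDist p) (hq : IsDist q) : IsDist (joint (prodDist p q)) :=
  ⟨fun _ => mul_nonneg (hp.1 _) (hq.1 _), by
    simp only [sum_joint, prodDist, ← Finset.sum_mul_sum, hp.2, hq.2, mul_one]⟩

theorem marg_prodDist (hq : ∑ l, q l = 1) : marg (prodDist p q) = p := by
  funext k
  simp only [marg, prodDist, ← Finset.mul_sum, hq, mul_one]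

theorem condDist_prodDist (hq : ∑ l, q l = 1) {k : Fin n} (hk : p k ≠ 0) :
    condDist (prodDist p q) k = q := by
  funext l
  rw [condDist, marg_prodDist hq, prodDist, mul_div_cancel_left₀ _ hk]

theorem joint_prodDist_unif : joint (prodDist (unif n) (unif m)) = unif (n * m) := by
  funext i
  simp only [joint, prodDist, unif, Nat.cast_mul, mul_inv]

end prodDist

theorem IsStronglyPseudoAdditive.one_add_mul_prodDist {lam α : ℝ} {T : (n : ℕ) → (Fin n → ℝ) → ℝ}
    (hT : IsStronglyPseudoAdditive lam α T) {n m : ℕ} {p : Fin n → ℝ} {q : Fin m → ℝ}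
    (hp : IsDist p) (hp_pos : ∀ k, 0 < p k) (hq : IsDist q) :
    1 + lam * T (n * m) (joint (prodDist p q)) = (1 + lam * T n p) * (1 + lam * T m q) := by
  have hmarg := marg_prodDist (p := p) hq.2
  have hcond : ∑ k, escort α (marg (prodDist p q)) k * T m (condDist (prodDist p q) k) =
      T m q := by
    simp only [hmarg, condDist_prodDist hq.2 (hp_pos _).ne', ← Finset.sum_mul,
      sum_escort α hp.pos hp_pos, one_mul]
  rw [hT n m hp.pos hq.pos _ (hp.joint_prodDist hq)
      (by rwa [hmarg]), hcond, hmarg]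
  ring

theorem IsStronglyPseudoAdditive.one_add_mul_unif_two_pow {lam α : ℝ} {T : (n : ℕ) → (Fin n → ℝ) → ℝ}
    (hT : IsStronglyPseudoAdditive lam α T) {n : ℕ} (hn : 1 ≤ n) :
    1 + lam * T (2 ^ n) (unif (2 ^ n)) = (1 + lam * T 2 (unif 2)) ^ n := by
  induction n, hn using Nat.le_induction with
  | base => rw [pow_one, pow_one]
  | succ n _ ih =>
    have hpos : 0 < 2 ^ n := Nat.two_pow_pos n
    have hmul := hT.one_add_mul_prodDist (isDist_unif hpos) (fun _ => by unfold unif; positivity)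
      (isDist_unif two_pos)
    rw [joint_prodDist_unif, ih] at hmul
    rw [pow_succ, pow_succ, hmul]

theorem tsallis_uniform_values_general
    (lam α : ℝ) (hlam : lam ≠ 0)
    (T : (n : ℕ) → (Fin n → ℝ) → ℝ)
    (hadd : ∀ n m, 1 ≤ n → 1 ≤ m → ∀ r : Fin n → Fin m → ℝ,
      IsDist (joint r) → (∀ k, 0 < marg r k) →
      T (n * m) (joint r) =
        T n (marg r) + (∑ k, escort α (marg r) k * T m (condDist r k)) +
        lam * T n (marg r) * (∑ k, escort α (marg r) k * T m (condDist r k))) :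
    ∀ n : ℕ, 1 ≤ n →
      T (2 ^ n) (unif (2 ^ n)) = ((1 + lam * T 2 (unif 2)) ^ n - 1) / lam := by
  intro n hn
  rw [eq_div_iff hlam, ← IsStronglyPseudoAdditive.one_add_mul_unif_two_pow hadd hn]
  ring

/-- Pseudo-additive strong additivity determines the entropy of the uniform
distribution on `2^n` points as the `n`-fold `λ`-deformed sum of `T₂(U₂)`. -/
theorem tsallis_uniform_values
    (lam α : ℝ) (hlam : lam ≠ 0) (hα : 0 < α)
    (T : (n : ℕ) → (Fin n → ℝ) → ℝ)
    (hadd : ∀ n m, 1 ≤ n → 1 ≤ m → ∀ r : Fin n → Fin m → ℝ,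
      IsDist (joint r) → (∀ k, 0 < marg r k) →
      T (n * m) (joint r) =
        T n (marg r) + (∑ k, escort α (marg r) k * T m (condDist r k)) +
        lam * T n (marg r) * (∑ k, escort α (marg r) k * T m (condDist r k))) :
    ∀ n : ℕ, 1 ≤ n →
      T (2 ^ n) (unif (2 ^ n)) = ((1 + lam * T 2 (unif 2)) ^ n - 1) / lam :=
  tsallis_uniform_values_general lam α hlam T hadd
end
end
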